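/- arXiv:2602.06769 — 2 statements merged into one kernel-verified Lean document; each statement's English description precedes it below -/
import Mathlib

section
/- Let π be a Markov policy with full support on a finite MDP, and define the reward R(s,a) = log π(a|s). Then for any Markov policy π', the entropy-regularized objective J(π') = E[∑_{t≥0} γ^t (R(s_t,a_t) + H(π'(·|s_t)))] equals -E[∑_{t≥0} γ^t D_KL(π'(·|s_t) ‖ π(·|s_t))], which is nonpositive, and J(π) = 0. Hence π is an optimal policy for the maximum entropy RL problem with reward R. -/
lemma kl_nonneg {A : Type*} [Fintype A] (p q : A → ℝ)
    (hp : ∀ a, 0 ≤ p a) (hq : ∀ a, 0 < q a)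
    (hp1 : ∑ a, p a = 1) (hq1 : ∑ a, q a = 1) :
    0 ≤ ∑ a, p a * Real.log (p a / q a) := by
  have key : ∀ a, p a * Real.log (q a / p a) ≤ q a - p a := by
    intro a
    rcases eq_or_lt_of_le (hp a) with h | h
    · simp [← h, (hq a).le]
    · have := Real.log_le_sub_one_of_pos (div_pos (hq a) h)
      calc p a * Real.log (q a / p a) ≤ p a * (q a / p a - 1) := by
            exact mul_le_mul_of_nonneg_left this (hp a)
        _ = q a - p a := by field_simp
  have hsum : ∑ a, p a * Real.log (q a / p a) ≤ 0 := by
    calc ∑ a, p a * Real.log (q a / p a) ≤ ∑ a, (q a - p a) :=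
          Finset.sum_le_sum fun a _ => key a
      _ = 0 := by rw [Finset.sum_sub_distrib, hp1, hq1]; ring
  have : ∑ a, p a * Real.log (p a / q a) = -∑ a, p a * Real.log (q a / p a) := by
    rw [← Finset.sum_neg_distrib]
    apply Finset.sum_congr rfl
    intro a _
    rcases eq_or_lt_of_le (hp a) with h | h
    · simp [← h]
    · rw [Real.log_div (ne_of_gt h) (ne_of_gt (hq a)),
        Real.log_div (ne_of_gt (hq a)) (ne_of_gt h)]; ring
  linarith

/-- For a full-support policy π and reward R(s,a) = log π(a|s), the
entropy-regularized objective of any policy π',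
J(π') = Σ_s d_{π'}(s) Σ_a π'(a|s)(R(s,a) + H-term), written via the discounted
state-occupancy weights d_{π'}(s) = Σ_t γ^t Pr(s_t = s), equals
-Σ_s d_{π'}(s) D_KL(π'(·|s)‖π(·|s)), is nonpositive, vanishes at π' = π, and
hence π is optimal for the maximum entropy RL problem with reward R. -/
theorem full_support_policy_optimal_for_its_log_reward
    {S A : Type*} [Fintype S] [Fintype A]
    (π : S → A → ℝ)
    (hπ0 : ∀ s a, 0 < π s a) (hπ1 : ∀ s, ∑ a, π s a = 1)
    (R : S → A → ℝ) (hR : ∀ s a, R s a = Real.log (π s a))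
    -- discounted state-occupancy weights of each policy (nonnegative)
    (d : (S → A → ℝ) → S → ℝ) (hd : ∀ π' s, 0 ≤ d π' s)
    -- the entropy-regularized objective J(π') = E[Σ γ^t (R + H(π'(·|s_t)))]
    (J : (S → A → ℝ) → ℝ)
    (hJ : ∀ π' : S → A → ℝ,
      J π' = ∑ s, d π' s * ∑ a, π' s a * (R s a - Real.log (π' s a))) :
    (∀ π' : S → A → ℝ, (∀ s a, 0 ≤ π' s a) → (∀ s, ∑ a, π' s a = 1) →
        J π' = -∑ s, d π' s * ∑ a, π' s a * Real.log (π' s a / π s a) ∧ J π' ≤ 0)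
    ∧ J π = 0
    ∧ (∀ π' : S → A → ℝ, (∀ s a, 0 ≤ π' s a) → (∀ s, ∑ a, π' s a = 1) →
        J π' ≤ J π) := by
  have hJπ : J π = 0 := by
    rw [hJ]
    apply Finset.sum_eq_zero
    intro s _
    have : ∑ a, π s a * (R s a - Real.log (π s a)) = 0 :=
      Finset.sum_eq_zero fun a _ => by rw [hR]; ring
    rw [this, mul_zero]
  have main : ∀ π' : S → A → ℝ, (∀ s a, 0 ≤ π' s a) → (∀ s, ∑ a, π' s a = 1) →
      J π' = -∑ s, d π' s * ∑ a, π' s a * Real.log (π' s a / π s a) ∧ J π' ≤ 0 := by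
    intro π' h0 h1
    have heq : J π' = -∑ s, d π' s * ∑ a, π' s a * Real.log (π' s a / π s a) := by
      rw [hJ, ← Finset.sum_neg_distrib]
      apply Finset.sum_congr rfl
      intro s _
      have inner : ∑ a, π' s a * (R s a - Real.log (π' s a))
          = -∑ a, π' s a * Real.log (π' s a / π s a) := by
        rw [← Finset.sum_neg_distrib]
        apply Finset.sum_congr rfl
        intro a _
        rcases eq_or_lt_of_le (h0 s a) with h | h
        · simp [← h]
        · rw [hR, Real.log_div (ne_of_gt h) (ne_of_gt (hπ0 s a))]; ring
      rw [inner]; ring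
    refine ⟨heq, ?_⟩
    rw [heq, neg_nonpos]
    apply Finset.sum_nonneg
    intro s _
    exact mul_nonneg (hd π' s)
      (kl_nonneg (π' s) (π s) (h0 s) (hπ0 s) (h1 s) (hπ1 s))
  exact ⟨main, hJπ, fun π' h0 h1 => by rw [hJπ]; exact (main π' h0 h1).2⟩
end

section
/- (Simulation Lemma for occupancy measures) Let π and π' be Markov policies on a finite MDP with discount γ ∈ (0,1), and let M^π, M^π' denote their normalized discounted state-action occupancy measures from initial distribution μ₀. Then ‖M^π - M^π'‖₁ ≤ (1/(1-γ)) · max_{s∈S} ‖π(·|s) - π'(·|s)‖₁. -/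
open scoped BigOperators

/-- Time-t state distribution of a finite MDP under policy π, starting from μ₀. -/
def stateDist {S A : Type*} [Fintype S] [Fintype A]
    (P : S → A → S → ℝ) (π : S → A → ℝ) (μ₀ : S → ℝ) : ℕ → S → ℝ
  | 0 => μ₀
  | (t + 1) => fun s' => ∑ s, ∑ a, stateDist P π μ₀ t s * π s a * P s a s'

/-- Normalized discounted state-action occupancy measure M^π(s,a). -/
noncomputable def occupancy {S A : Type*} [Fintype S] [Fintype A]
    (P : S → A → S → ℝ) (μ₀ : S → ℝ) (γ : ℝ) (π : S → A → ℝ) (s : S) (a : A) : ℝ :=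
  (1 - γ) * ∑' t : ℕ, γ ^ t * stateDist P π μ₀ t s * π s a

/-! The state marginal `d^π(s) = ∑ₐ M^π(s,a)` satisfies the Bellman flow equation
`d^π = (1 - γ) μ₀ + γ Pᵀ M^π`, and `M^π(s,a) = d^π(s) π(a|s)`. Since a stochastic kernel is a
contraction in `ℓ¹`, the flow equation gives `‖d^π - d^π'‖₁ ≤ γ ‖M^π - M^π'‖₁`, while splitting
`d^π π - d^π' π' = (d^π - d^π') π + d^π' (π - π')` gives `‖M^π - M^π'‖₁ ≤ ‖d^π - d^π'‖₁ + ε`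
with `ε = maxₛ ‖π(·|s) - π'(·|s)‖₁`. Together, `(1 - γ) ‖M^π - M^π'‖₁ ≤ ε`. -/

open Finset

section StochasticMatrix

variable {ι κ : Type*} [Fintype ι] [Fintype κ]

theorem sum_smul_mem_stdSimplex {x : ι → ℝ} {K : ι → κ → ℝ} (hx : x ∈ stdSimplex ℝ ι)
    (hK : ∀ i, K i ∈ stdSimplex ℝ κ) : ∑ i, x i • K i ∈ stdSimplex ℝ κ :=
  (convex_stdSimplex ℝ κ).sum_mem (fun i _ => hx.1 i) hx.2 fun i _ => hK i

theorem sum_abs_sum_mul_le_sum_abs (x : ι → ℝ) {K : ι → κ → ℝ}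
    (hK : ∀ i, K i ∈ stdSimplex ℝ κ) : ∑ j, |∑ i, x i * K i j| ≤ ∑ i, |x i| :=
  calc ∑ j, |∑ i, x i * K i j| ≤ ∑ j, ∑ i, |x i| * K i j := by
        gcongr with j
        refine (abs_sum_le_sum_abs _ _).trans_eq (sum_congr rfl fun i _ => ?_)
        rw [abs_mul, abs_of_nonneg ((hK i).1 j)]
    _ = ∑ i, |x i| := by
        rw [sum_comm]
        simp only [← mul_sum, (hK _).2, mul_one]

theorem sum_abs_mul_sub_mul_le {A : Type*} [Fintype A] (μ : ι → ℝ) {ν : ι → ℝ}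
    (hν : ν ∈ stdSimplex ℝ ι) {π : ι → A → ℝ} (hπ : ∀ i, π i ∈ stdSimplex ℝ A)
    (π' : ι → A → ℝ) {ε : ℝ} (hε : ∀ i, ∑ a, |π i a - π' i a| ≤ ε) :
    ∑ i, ∑ a, |μ i * π i a - ν i * π' i a| ≤ ∑ i, |μ i - ν i| + ε :=
  calc ∑ i, ∑ a, |μ i * π i a - ν i * π' i a|
      ≤ ∑ i, ∑ a, (|μ i - ν i| * π i a + ν i * |π i a - π' i a|) := by
        gcongr with i _ a _
        rw [show μ i * π i a - ν i * π' i a = (μ i - ν i) * π i a + ν i * (π i a - π' i a) by ring]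
        refine (abs_add_le _ _).trans_eq ?_
        rw [abs_mul, abs_mul, abs_of_nonneg ((hπ i).1 a), abs_of_nonneg (hν.1 i)]
    _ ≤ ∑ i, (|μ i - ν i| + ν i * ε) := by
        gcongr with i
        rw [sum_add_distrib, ← mul_sum, ← mul_sum, (hπ i).2, mul_one]
        exact add_le_add_right (mul_le_mul_of_nonneg_left (hε i) (hν.1 i)) _
    _ = ∑ i, |μ i - ν i| + ε := by rw [sum_add_distrib, ← sum_mul, hν.2, one_mul]

end StochasticMatrix

noncomputable def stateOccupancy {S A : Type*} [Fintype S] [Fintype A]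
    (P : S → A → S → ℝ) (μ₀ : S → ℝ) (γ : ℝ) (π : S → A → ℝ) (s : S) : ℝ :=
  (1 - γ) * ∑' t : ℕ, γ ^ t * stateDist P π μ₀ t s

section MDP

variable {S A : Type*} [Fintype S] [Fintype A] {P : S → A → S → ℝ} {μ₀ : S → ℝ} {γ : ℝ}
  {π π' : S → A → ℝ}

theorem stateDist_succ (t : ℕ) :
    stateDist P π μ₀ (t + 1) = ∑ s, stateDist P π μ₀ t s • ∑ a, π s a • P s a := by
  ext s'
  simp [stateDist, mul_sum, mul_assoc]

theorem stateDist_mem_stdSimplex (hP : ∀ s a, P s a ∈ stdSimplex ℝ S)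
    (hπ : ∀ s, π s ∈ stdSimplex ℝ A) (hμ₀ : μ₀ ∈ stdSimplex ℝ S) (t : ℕ) :
    stateDist P π μ₀ t ∈ stdSimplex ℝ S := by
  induction t with
  | zero => exact hμ₀
  | succ t ih =>
    rw [stateDist_succ]
    exact sum_smul_mem_stdSimplex ih fun s => sum_smul_mem_stdSimplex (hπ s) (hP s)

theorem summable_geometric_mul_stateDist (hP : ∀ s a, P s a ∈ stdSimplex ℝ S)
    (hπ : ∀ s, π s ∈ stdSimplex ℝ A) (hμ₀ : μ₀ ∈ stdSimplex ℝ S) (hγ0 : 0 ≤ γ) (hγ1 : γ < 1)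
    (s : S) : Summable fun t => γ ^ t * stateDist P π μ₀ t s := by
  have hd := stateDist_mem_stdSimplex hP hπ hμ₀
  refine .of_nonneg_of_le (fun t => mul_nonneg (pow_nonneg hγ0 t) ((hd t).1 s))
    (fun t => ?_) (summable_geometric_of_lt_one hγ0 hγ1)
  exact mul_le_of_le_one_right (pow_nonneg hγ0 t) (mem_Icc_of_mem_stdSimplex (hd t) s).2

theorem occupancy_eq_stateOccupancy_mul (s : S) (a : A) :
    occupancy P μ₀ γ π s a = stateOccupancy P μ₀ γ π s * π s a := by
  rw [occupancy, stateOccupancy, mul_assoc, ← tsum_mul_right]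

theorem stateOccupancy_mem_stdSimplex (hP : ∀ s a, P s a ∈ stdSimplex ℝ S)
    (hπ : ∀ s, π s ∈ stdSimplex ℝ A) (hμ₀ : μ₀ ∈ stdSimplex ℝ S) (hγ0 : 0 ≤ γ) (hγ1 : γ < 1) :
    stateOccupancy P μ₀ γ π ∈ stdSimplex ℝ S := by
  have hd := stateDist_mem_stdSimplex hP hπ hμ₀
  refine ⟨fun s => mul_nonneg (sub_nonneg.2 hγ1.le)
    (tsum_nonneg fun t => mul_nonneg (pow_nonneg hγ0 t) ((hd t).1 s)), ?_⟩
  calc ∑ s, stateOccupancy P μ₀ γ π s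
      = (1 - γ) * ∑' t : ℕ, ∑ s, γ ^ t * stateDist P π μ₀ t s := by
        rw [Summable.tsum_finsetSum fun s _ =>
          summable_geometric_mul_stateDist hP hπ hμ₀ hγ0 hγ1 s, mul_sum]
        rfl
    _ = (1 - γ) * ∑' t : ℕ, γ ^ t := by simp only [← mul_sum, (hd _).2, mul_one]
    _ = 1 := by
        rw [tsum_geometric_of_lt_one hγ0 hγ1]
        exact mul_inv_cancel₀ (sub_ne_zero.2 hγ1.ne')

theorem stateOccupancy_bellman_flow (hP : ∀ s a, P s a ∈ stdSimplex ℝ S)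
    (hπ : ∀ s, π s ∈ stdSimplex ℝ A) (hμ₀ : μ₀ ∈ stdSimplex ℝ S) (hγ0 : 0 ≤ γ) (hγ1 : γ < 1)
    (s' : S) :
    stateOccupancy P μ₀ γ π s' =
      (1 - γ) * μ₀ s' + γ * ∑ s, ∑ a, occupancy P μ₀ γ π s a * P s a s' := by
  have hsum := summable_geometric_mul_stateDist hP hπ hμ₀ hγ0 hγ1
  have hshift : ∑' t : ℕ, γ ^ (t + 1) * stateDist P π μ₀ (t + 1) s' =
      γ * ∑ s, ∑ a, (∑' t : ℕ, γ ^ t * stateDist P π μ₀ t s) * (π s a * P s a s') := by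
    calc ∑' t : ℕ, γ ^ (t + 1) * stateDist P π μ₀ (t + 1) s'
        = γ * ∑' t : ℕ, ∑ s, ∑ a, γ ^ t * stateDist P π μ₀ t s * (π s a * P s a s') := by
          rw [← tsum_mul_left]
          congr 1 with t
          simp only [stateDist, pow_succ, mul_sum]
          exact sum_congr rfl fun s _ => sum_congr rfl fun a _ => by ring
      _ = _ := by
          rw [Summable.tsum_finsetSum fun s _ => summable_sum fun a _ => (hsum s).mul_right _]
          simp only [Summable.tsum_finsetSum fun a _ => (hsum _).mul_right _, tsum_mul_right]
  rw [stateOccupancy, (hsum s').tsum_eq_zero_add, hshift]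
  simp only [occupancy_eq_stateOccupancy_mul, stateOccupancy, stateDist, pow_zero, one_mul,
    mul_add, mul_sum]
  exact congrArg _ (sum_congr rfl fun s _ => sum_congr rfl fun a _ => by ring)

theorem sum_abs_stateOccupancy_sub_le (hP : ∀ s a, P s a ∈ stdSimplex ℝ S)
    (hπ : ∀ s, π s ∈ stdSimplex ℝ A) (hπ' : ∀ s, π' s ∈ stdSimplex ℝ A)
    (hμ₀ : μ₀ ∈ stdSimplex ℝ S) (hγ0 : 0 ≤ γ) (hγ1 : γ < 1) :
    ∑ s, |stateOccupancy P μ₀ γ π s - stateOccupancy P μ₀ γ π' s| ≤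
      γ * ∑ s, ∑ a, |occupancy P μ₀ γ π s a - occupancy P μ₀ γ π' s a| := by
  have hdiff : ∀ s', stateOccupancy P μ₀ γ π s' - stateOccupancy P μ₀ γ π' s' =
      γ * ∑ p : S × A,
        (occupancy P μ₀ γ π p.1 p.2 - occupancy P μ₀ γ π' p.1 p.2) * P p.1 p.2 s' := by
    intro s'
    rw [stateOccupancy_bellman_flow hP hπ hμ₀ hγ0 hγ1,
      stateOccupancy_bellman_flow hP hπ' hμ₀ hγ0 hγ1,
      Fintype.sum_prod_type' fun s a =>
        (occupancy P μ₀ γ π s a - occupancy P μ₀ γ π' s a) * P s a s']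
    simp only [sub_mul, sum_sub_distrib]
    ring
  simp only [hdiff, abs_mul, abs_of_nonneg hγ0, ← mul_sum, ← Fintype.sum_prod_type']
  exact mul_le_mul_of_nonneg_left (sum_abs_sum_mul_le_sum_abs _ fun p => hP p.1 p.2) hγ0

end MDP

theorem simulation_lemma_occupancy_general
    {S A : Type*} [Fintype S] [Fintype A] [Nonempty S]
    (P : S → A → S → ℝ) (hP0 : ∀ s a s', 0 ≤ P s a s') (hP1 : ∀ s a, ∑ s', P s a s' = 1)
    (μ₀ : S → ℝ) (hμ0 : ∀ s, 0 ≤ μ₀ s) (hμ1 : ∑ s, μ₀ s = 1)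
    (γ : ℝ) (hγ0 : 0 < γ) (hγ1 : γ < 1)
    (π π' : S → A → ℝ)
    (hπ0 : ∀ s a, 0 ≤ π s a) (hπ1 : ∀ s, ∑ a, π s a = 1)
    (hπ'0 : ∀ s a, 0 ≤ π' s a) (hπ'1 : ∀ s, ∑ a, π' s a = 1) :
    (∑ s, ∑ a, |occupancy P μ₀ γ π s a - occupancy P μ₀ γ π' s a|)
      ≤ (1 / (1 - γ)) *
        (Finset.univ.sup' Finset.univ_nonempty (fun s => ∑ a, |π s a - π' s a|)) := by
  have hP : ∀ s a, P s a ∈ stdSimplex ℝ S := fun s a => ⟨hP0 s a, hP1 s a⟩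
  have hμ₀ : μ₀ ∈ stdSimplex ℝ S := ⟨hμ0, hμ1⟩
  have hπ : ∀ s, π s ∈ stdSimplex ℝ A := fun s => ⟨hπ0 s, hπ1 s⟩
  have hπ' : ∀ s, π' s ∈ stdSimplex ℝ A := fun s => ⟨hπ'0 s, hπ'1 s⟩
  set ε := univ.sup' univ_nonempty fun s => ∑ a, |π s a - π' s a|
  set L := ∑ s, ∑ a, |occupancy P μ₀ γ π s a - occupancy P μ₀ γ π' s a|
  have hL : L ≤ γ * L + ε :=
    calc L = ∑ s, ∑ a,
          |stateOccupancy P μ₀ γ π s * π s a - stateOccupancy P μ₀ γ π' s * π' s a| := by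
          simp only [L, occupancy_eq_stateOccupancy_mul]
      _ ≤ ∑ s, |stateOccupancy P μ₀ γ π s - stateOccupancy P μ₀ γ π' s| + ε :=
          sum_abs_mul_sub_mul_le _ (stateOccupancy_mem_stdSimplex hP hπ' hμ₀ hγ0.le hγ1) hπ _
            fun s => le_sup' (fun s => ∑ a, |π s a - π' s a|) (mem_univ s)
      _ ≤ γ * L + ε := by
          gcongr
          exact sum_abs_stateOccupancy_sub_le hP hπ hπ' hμ₀ hγ0.le hγ1
  rw [one_div, inv_mul_eq_div, le_div_iff₀ (sub_pos.2 hγ1)]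
  linarith

/-- Simulation Lemma: for any two Markov policies π, π',
‖M^π - M^π'‖₁ ≤ (1/(1-γ)) · max_s ‖π(·|s) - π'(·|s)‖₁. -/
theorem simulation_lemma_occupancy
    {S A : Type*} [Fintype S] [Fintype A] [Nonempty S] [Nonempty A]
    (P : S → A → S → ℝ) (hP0 : ∀ s a s', 0 ≤ P s a s') (hP1 : ∀ s a, ∑ s', P s a s' = 1)
    (μ₀ : S → ℝ) (hμ0 : ∀ s, 0 ≤ μ₀ s) (hμ1 : ∑ s, μ₀ s = 1)
    (γ : ℝ) (hγ0 : 0 < γ) (hγ1 : γ < 1)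
    (π π' : S → A → ℝ)
    (hπ0 : ∀ s a, 0 ≤ π s a) (hπ1 : ∀ s, ∑ a, π s a = 1)
    (hπ'0 : ∀ s a, 0 ≤ π' s a) (hπ'1 : ∀ s, ∑ a, π' s a = 1) :
    (∑ s, ∑ a, |occupancy P μ₀ γ π s a - occupancy P μ₀ γ π' s a|)
      ≤ (1 / (1 - γ)) *
        (Finset.univ.sup' Finset.univ_nonempty (fun s => ∑ a, |π s a - π' s a|)) :=
  simulation_lemma_occupancy_general P hP0 hP1 μ₀ hμ0 hμ1 γ hγ0 hγ1 π π' hπ0 hπ1 hπ'0 hπ'1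
end
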